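/- There exists an absolute constant C_0 > 0 such that for every irrational x ∈ (0,1) and every N ≥ 0, | Σ_{n=0}^{N} β*_{n−1}·log(1/x_n) − Σ_{n=0}^{N} log(b_{n+1} − 1)/q*_n | < C_0. In particular, B_0(x) and Σ_{n=0}^∞ log(b_{n+1} − 1)/q*_n are simultaneously finite or infinite, and when finite they differ by at most C_0. -/

import Mathlib

open Set Filter
open scoped ENNReal

/-- The by-excess continued fraction map `A_0(x) = ⌊1/x + 1⌋ − 1/x`. -/
noncomputable def exm (x : ℝ) : ℝ := ⌊1 / x + 1⌋ - 1 / x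

/-- `bEx x n = b_{n+1} = ⌊1/A_0^n(x) + 1⌋`, the by-excess digits of `x`. -/
noncomputable def bEx (x : ℝ) (n : ℕ) : ℤ := ⌊1 / (exm^[n] x) + 1⌋

/-- `qstar x (n+1) = q*_n`, with `q*_{-1} = 0`, `q*_0 = 1` and
`q*_n = b_n·q*_{n−1} − q*_{n−2}`. -/
noncomputable def qstar (x : ℝ) : ℕ → ℤ
  | 0 => 0
  | 1 => 1
  | n + 2 => bEx x n * qstar x (n + 1) - qstar x n

/-- The semi-Brjuno function `B_0(x) = ∑_{n≥0} β*_{n−1}·log(1/x_n) ∈ [0,∞]`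
for `x ∈ (0,1)`, where `x_n = A_0^n(x)` and `β*_{n−1} = x_0⋯x_{n−1}`. -/
noncomputable def semiB (x : ℝ) : ℝ≥0∞ :=
  ∑' n : ℕ, ENNReal.ofReal ((∏ i ∈ Finset.range n, exm^[i] x) * Real.log (1 / (exm^[n] x)))

/-! The identity `β*_{n−1} (q*_n − q*_{n−1} x_n) = 1` gives `1/q*_n ≤ β*_{n−1} ≤ 1/q*_n + β*_n`,
and `b_{n+1} − 1 < 1/x_n`; hence every term `β*_{n−1} log(1/x_n) − log(b_{n+1} − 1)/q*_n` is
nonnegative. Writing it as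
`β*_{n−1} (log(1/x_n) − log(b_{n+1} − 1)) + (β*_{n−1} − 1/q*_n) log(b_{n+1} − 1)`,
the first part is at most `2 (β*_n − β*_{n+1})` by `log t ≤ t − 1`, and the second at most
`2 log 2 (1/q*_n − 1/q*_{n+1})`, because `log(b − 1) ≤ (b − 2) log 2` and `q*_{n+1} ≥ 2 q*_n`
as soon as `b_{n+1} ≥ 3`. Both bounds telescope, so the difference of the partial sums lies in
`[0, 2x + 2 log 2] ⊆ [0, 4)`. -/

open Real

-- `betaStar x n` is the paper's `β*_{n−1} = x_0 ⋯ x_{n−1}`.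
noncomputable def betaStar (x : ℝ) (n : ℕ) : ℝ := ∏ i ∈ Finset.range n, exm^[i] x

lemma betaStar_succ (x : ℝ) (n : ℕ) : betaStar x (n + 1) = betaStar x n * exm^[n] x :=
  Finset.prod_range_succ _ _

lemma betaStar_pos {x : ℝ} (hI : ∀ n, exm^[n] x ∈ Ioo 0 1) (n : ℕ) : 0 < betaStar x n :=
  Finset.prod_pos fun i _ => (hI i).1

lemma exm_mem_Ioo {y : ℝ} (hy : Irrational y) : exm y ∈ Ioo 0 1 := by
  have hinv : Irrational (1 / y) := by rw [one_div]; exact hy.inv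
  have hfloor : (⌊1 / y⌋ : ℝ) < 1 / y := (Int.floor_le _).lt_of_ne (hinv.ne_int _).symm
  unfold exm
  rw [Int.floor_add_one]
  push_cast
  constructor <;> linarith [Int.lt_floor_add_one (1 / y)]

lemma irrational_exm {y : ℝ} (hy : Irrational y) : Irrational (exm y) := by
  unfold exm
  rw [one_div]
  exact hy.inv.intCast_sub _

lemma irrational_iterate_exm {x : ℝ} (hx : Irrational x) (n : ℕ) : Irrational (exm^[n] x) := by
  induction n with
  | zero => exact hx
  | succ n ih => rw [Function.iterate_succ_apply']; exact irrational_exm ih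

lemma iterate_exm_mem_Ioo {x : ℝ} (hx : Irrational x) (hx01 : x ∈ Ioo 0 1) :
    ∀ n, exm^[n] x ∈ Ioo 0 1
  | 0 => hx01
  | n + 1 => by
    rw [Function.iterate_succ_apply']
    exact exm_mem_Ioo (irrational_iterate_exm hx n)

lemma one_div_iterate_exm (x : ℝ) (n : ℕ) : 1 / exm^[n] x = bEx x n - exm^[n + 1] x := by
  rw [Function.iterate_succ_apply']
  unfold bEx exm
  ring

lemma two_le_bEx {x : ℝ} (hI : ∀ n, exm^[n] x ∈ Ioo 0 1) (n : ℕ) : 2 ≤ bEx x n := by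
  have h : 1 < 1 / exm^[n] x := (one_lt_div (hI n).1).2 (hI n).2
  unfold bEx
  rw [Int.le_floor]
  push_cast
  linarith

lemma qstar_add_two (x : ℝ) (n : ℕ) :
    qstar x (n + 2) = bEx x n * qstar x (n + 1) - qstar x n := rfl

section qstar

variable {x : ℝ} (hb : ∀ n, 2 ≤ bEx x n)
include hb

lemma qstar_nonneg_and_lt_succ (n : ℕ) : 0 ≤ qstar x n ∧ qstar x n < qstar x (n + 1) := by
  induction n with
  | zero => simp [qstar]
  | succ n ih =>
    refine ⟨ih.2.le.trans' ih.1, ?_⟩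
    rw [qstar_add_two]
    nlinarith [hb n]

lemma one_le_qstar_succ (n : ℕ) : 1 ≤ qstar x (n + 1) := by
  have := qstar_nonneg_and_lt_succ hb n
  omega

lemma bEx_sub_two_mul_qstar_le (n : ℕ) :
    (bEx x n - 2) * qstar x (n + 1) ≤ qstar x (n + 2) - qstar x (n + 1) := by
  have := qstar_nonneg_and_lt_succ hb n
  rw [qstar_add_two]
  linarith

end qstar

lemma betaStar_mul_qstar_sub {x : ℝ} (h0 : ∀ n, exm^[n] x ≠ 0) (n : ℕ) :
    betaStar x n * (qstar x (n + 1) - qstar x n * exm^[n] x) = 1 := by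
  induction n with
  | zero => simp [betaStar, qstar]
  | succ n ih =>
    have hb : (bEx x n : ℝ) = 1 / exm^[n] x + exm^[n + 1] x := by
      rw [one_div_iterate_exm]; ring
    rw [betaStar_succ, qstar_add_two]
    push_cast
    rw [hb]
    calc _ = betaStar x n * (qstar x (n + 1) - qstar x n * exm^[n] x) := by
          field_simp [h0 n]
          ring
      _ = 1 := ih

lemma log_intCast_le_mul_log_two {m : ℤ} (hm : 1 ≤ m) : log m ≤ (m - 1) * log 2 := by
  lift m to ℕ using by omega
  have hpow : (m : ℝ) ≤ 2 ^ (m - 1) := by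
    have := @Nat.lt_two_pow_self (m - 1)
    exact_mod_cast (by omega : m ≤ 2 ^ (m - 1))
  calc log ((m : ℤ) : ℝ) ≤ log (2 ^ (m - 1)) := log_le_log (by norm_cast; omega) (by exact_mod_cast hpow)
    _ = (m - 1 : ℕ) * log 2 := log_pow _ _
    _ = ((m : ℤ) - 1) * log 2 := by push_cast [Nat.cast_sub (by omega : 1 ≤ m)]; rfl

lemma log_sub_sub_log_sub_one_le {b v : ℝ} (hb : 2 ≤ b) (hv0 : 0 ≤ v) (hv1 : v ≤ 1) :
    log (b - v) - log (b - 1) ≤ 2 * (1 - v) / (b - v) := by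
  calc log (b - v) - log (b - 1) = log ((b - v) / (b - 1)) :=
        (log_div (by linarith) (by linarith)).symm
    _ ≤ (b - v) / (b - 1) - 1 := log_le_sub_one_of_pos (by apply div_pos <;> linarith)
    _ = (1 - v) / (b - 1) := by rw [div_sub_one (by linarith)]; ring_nf
    _ ≤ 2 * (1 - v) / (b - v) := by
      rw [div_le_div_iff₀ (by linarith) (by linarith)]
      nlinarith [mul_nonneg (sub_nonneg.2 hv1) (by linarith : 0 ≤ b + v - 2)]

lemma mul_sub_two_le_two_mul_inv_sub_inv {b : ℤ} {c q q' : ℝ} (hb : 2 ≤ b) (hq : 0 < q)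
    (hc : c * ((b - 2) * q) ≤ 1) (hq' : (b - 2) * q ≤ q' - q) :
    c * (b - 2) ≤ 2 * (1 / q - 1 / q') := by
  rcases hb.eq_or_lt with rfl | hb3
  · have : 1 / q' ≤ 1 / q := one_div_le_one_div_of_le hq (by push_cast at hq'; linarith)
    push_cast
    linarith
  · have hb3 : (3 : ℝ) ≤ b := by exact_mod_cast hb3
    have hcq : c * (b - 2) ≤ 1 / q := by
      rw [le_div_iff₀ hq]; linarith
    have hq2 : 1 / q' ≤ 1 / (2 * q) := one_div_le_one_div_of_le (by positivity) (by nlinarith)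
    have : 1 / (2 * q) = 1 / q / 2 := by field_simp
    linarith

section step

variable {x : ℝ} (hI : ∀ n, exm^[n] x ∈ Ioo 0 1)
include hI

lemma qstar_succ_pos (n : ℕ) : (0 : ℝ) < qstar x (n + 1) := by
  exact_mod_cast one_le_qstar_succ (two_le_bEx hI) n

lemma one_div_qstar_le_betaStar (n : ℕ) : 1 / (qstar x (n + 1) : ℝ) ≤ betaStar x n := by
  have hid := betaStar_mul_qstar_sub (fun k => (hI k).1.ne') n
  have hqm : (0 : ℝ) ≤ qstar x n := by exact_mod_cast (qstar_nonneg_and_lt_succ (two_le_bEx hI) n).1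
  rw [div_le_iff₀ (qstar_succ_pos hI n)]
  nlinarith [mul_nonneg (mul_nonneg (betaStar_pos hI n).le hqm) (hI n).1.le]

lemma betaStar_sub_one_div_qstar_le (n : ℕ) :
    betaStar x n - 1 / (qstar x (n + 1) : ℝ) ≤ betaStar x (n + 1) := by
  have hid := betaStar_mul_qstar_sub (fun k => (hI k).1.ne') n
  have hq := qstar_nonneg_and_lt_succ (two_le_bEx hI) n
  have hqm : (qstar x n : ℝ) ≤ qstar x (n + 1) := by exact_mod_cast hq.2.le
  have hβu : 0 ≤ betaStar x n * exm^[n] x := (mul_pos (betaStar_pos hI n) (hI n).1).le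
  have h : (betaStar x n - betaStar x n * exm^[n] x) * qstar x (n + 1) ≤ 1 := by
    nlinarith [mul_le_mul_of_nonneg_left hqm hβu]
  rw [betaStar_succ]
  linarith [(le_div_iff₀ (qstar_succ_pos hI n)).2 h]

lemma betaStar_succ_mul_le_one (n : ℕ) :
    betaStar x (n + 1) * ((bEx x n - 2) * qstar x (n + 1)) ≤ 1 := by
  have hid := betaStar_mul_qstar_sub (fun k => (hI k).1.ne') (n + 1)
  have hgap : ((bEx x n : ℝ) - 2) * qstar x (n + 1) ≤ qstar x (n + 2) - qstar x (n + 1) := by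
    exact_mod_cast bEx_sub_two_mul_qstar_le (two_le_bEx hI) n
  have hq : (0 : ℝ) ≤ qstar x (n + 1) := (qstar_succ_pos hI n).le
  have hβ := betaStar_pos hI (n + 1)
  nlinarith [mul_le_mul_of_nonneg_left hgap hβ.le,
    mul_nonneg (mul_nonneg hβ.le hq) (sub_nonneg.2 (hI (n + 1)).2.le)]

lemma log_bEx_sub_one_div_qstar_le (n : ℕ) :
    log (bEx x n - 1) / qstar x (n + 1) ≤ betaStar x n * log (1 / exm^[n] x) := by
  have hb : (2 : ℝ) ≤ bEx x n := by exact_mod_cast two_le_bEx hI n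
  have hlog : log (bEx x n - 1) ≤ log (1 / exm^[n] x) := by
    rw [one_div_iterate_exm]
    exact log_le_log (by linarith) (by linarith [(hI (n + 1)).2])
  calc log (bEx x n - 1) / qstar x (n + 1) = 1 / qstar x (n + 1) * log (bEx x n - 1) := by ring
    _ ≤ betaStar x n * log (bEx x n - 1) :=
      mul_le_mul_of_nonneg_right (one_div_qstar_le_betaStar hI n) (log_nonneg (by linarith))
    _ ≤ betaStar x n * log (1 / exm^[n] x) :=
      mul_le_mul_of_nonneg_left hlog (betaStar_pos hI n).le

lemma betaStar_mul_log_sub_le (n : ℕ) :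
    betaStar x n * (log (1 / exm^[n] x) - log (bEx x n - 1)) ≤
      2 * (betaStar x (n + 1) - betaStar x (n + 2)) := by
  have hv := hI (n + 1)
  have hlog := log_sub_sub_log_sub_one_le (b := bEx x n) (by exact_mod_cast two_le_bEx hI n)
    hv.1.le hv.2.le
  rw [← one_div_iterate_exm, div_div_eq_mul_div, div_one] at hlog
  simp only [betaStar_succ]
  nlinarith [mul_le_mul_of_nonneg_left hlog (betaStar_pos hI n).le]

lemma betaStar_sub_one_div_qstar_mul_log_le (n : ℕ) :
    (betaStar x n - 1 / qstar x (n + 1)) * log (bEx x n - 1) ≤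
      2 * log 2 * (1 / qstar x (n + 1) - 1 / qstar x (n + 2)) := by
  have hb := two_le_bEx hI n
  have hb' : (2 : ℝ) ≤ bEx x n := by exact_mod_cast hb
  have hlog : log (bEx x n - 1) ≤ (bEx x n - 2) * log 2 := by
    have := log_intCast_le_mul_log_two (m := bEx x n - 1) (by omega)
    push_cast at this
    linarith
  have hgap : ((bEx x n : ℝ) - 2) * qstar x (n + 1) ≤ qstar x (n + 2) - qstar x (n + 1) := by
    exact_mod_cast bEx_sub_two_mul_qstar_le (two_le_bEx hI) n
  have hβ : betaStar x (n + 1) * (bEx x n - 2) ≤ 2 * (1 / qstar x (n + 1) - 1 / qstar x (n + 2)) :=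
    mul_sub_two_le_two_mul_inv_sub_inv hb (qstar_succ_pos hI n) (betaStar_succ_mul_le_one hI n) hgap
  calc (betaStar x n - 1 / qstar x (n + 1)) * log (bEx x n - 1)
      ≤ betaStar x (n + 1) * ((bEx x n - 2) * log 2) :=
        mul_le_mul (betaStar_sub_one_div_qstar_le hI n) hlog (log_nonneg (by linarith))
          (betaStar_pos hI (n + 1)).le
    _ ≤ 2 * log 2 * (1 / qstar x (n + 1) - 1 / qstar x (n + 2)) := by
      nlinarith [mul_le_mul_of_nonneg_right hβ (log_nonneg one_le_two : (0 : ℝ) ≤ log 2)]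

end step

section sum

variable {x : ℝ} (hI : ∀ n, exm^[n] x ∈ Ioo 0 1)
include hI

lemma sum_sub_sum_nonneg (N : ℕ) :
    0 ≤ ∑ n ∈ Finset.range (N + 1),
      (betaStar x n * log (1 / exm^[n] x) - log (bEx x n - 1) / qstar x (n + 1)) :=
  Finset.sum_nonneg fun n _ => sub_nonneg.2 (log_bEx_sub_one_div_qstar_le hI n)

lemma sum_sub_sum_le (N : ℕ) :
    ∑ n ∈ Finset.range (N + 1),
      (betaStar x n * log (1 / exm^[n] x) - log (bEx x n - 1) / qstar x (n + 1)) ≤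
      2 * x + 2 * log 2 := by
  set f : ℕ → ℝ := fun n => 2 * betaStar x (n + 1) + 2 * log 2 / qstar x (n + 1) with hf
  have hstep : ∀ n, betaStar x n * log (1 / exm^[n] x) - log (bEx x n - 1) / qstar x (n + 1) ≤
      f n - f (n + 1) := by
    intro n
    have hA := betaStar_mul_log_sub_le hI n
    have hB := betaStar_sub_one_div_qstar_mul_log_le hI n
    have hsplit : betaStar x n * log (1 / exm^[n] x) - log (bEx x n - 1) / qstar x (n + 1) =
        betaStar x n * (log (1 / exm^[n] x) - log (bEx x n - 1)) +
          (betaStar x n - 1 / qstar x (n + 1)) * log (bEx x n - 1) := by ring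
    have hdiff : f n - f (n + 1) = 2 * (betaStar x (n + 1) - betaStar x (n + 2)) +
        2 * log 2 * (1 / qstar x (n + 1) - 1 / qstar x (n + 2)) := by simp only [hf]; ring
    linarith
  have hf0 : f 0 = 2 * x + 2 * log 2 := by simp [hf, betaStar, qstar]
  have hfpos : 0 < f (N + 1) := by
    have := qstar_succ_pos hI (N + 1)
    have := betaStar_pos hI (N + 2)
    have := log_pos one_lt_two
    positivity
  calc _ ≤ ∑ n ∈ Finset.range (N + 1), (f n - f (n + 1)) := Finset.sum_le_sum fun n _ => hstep n
    _ = f 0 - f (N + 1) := Finset.sum_range_sub' f (N + 1)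
    _ ≤ 2 * x + 2 * log 2 := by linarith

end sum

theorem semiB_close_to_q_series :
    ∃ C : ℝ, 0 < C ∧ ∀ x : ℝ, Irrational x → x ∈ Set.Ioo (0 : ℝ) 1 → ∀ N : ℕ,
      |∑ n ∈ Finset.range (N + 1),
          (∏ i ∈ Finset.range n, exm^[i] x) * Real.log (1 / (exm^[n] x)) -
        ∑ n ∈ Finset.range (N + 1),
          Real.log ((bEx x n : ℝ) - 1) / (qstar x (n + 1) : ℝ)| < C := by
  refine ⟨4, by norm_num, fun x hirr hx N => ?_⟩
  have hI := iterate_exm_mem_Ioo hirr hx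
  rw [← Finset.sum_sub_distrib]
  have hlow := sum_sub_sum_nonneg hI N
  have hup := sum_sub_sum_le hI N
  have hlog2 := log_two_lt_d9
  unfold betaStar at hlow hup
  rw [abs_lt]
  constructor <;> linarith [hx.2]
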